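/- arXiv:1709.00253 — 2 statements merged into one kernel-verified Lean document; each statement's English description precedes it below -/
import Mathlib

section
/- Let p(τ), p̃(τ) be two smooth curves in a complete Riemannian manifold M with 0 < d(τ) = d_M(p(τ), p̃(τ)) < min{i₀, 1/√(2B₀)} for all τ, where i₀ is a lower bound on the injectivity radius and |R̄| ≤ B₀. Let γ_τ(s) = exp_{p(τ)}(s v_τ), s ∈ [0,1], be the unique minimizing geodesic from p(τ) to p̃(τ), and J the Jacobi field along γ_τ induced by variation in τ. Let P denote parallel transport along γ_τ from T_{p̃}M to T_pM. Then |∇̄_{γ̇} J| ≤ 2B₀ |∂_τ p| d² + 2 |P ∂_τ p̃ − ∂_τ p|. -/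
/-!
Let `A = max_{[0,1]} ‖f'‖ = ‖f' s₀‖`. Integrating `f'` gives `‖f‖ ≤ ‖f 0‖ + A`, hence
`‖f''‖ ≤ K (‖f 0‖ + A)` with `K = B₀ d²`. The mean value theorem applied to `⟪f, f' s₀⟫` yields
`c` with `⟪f' c, f' s₀⟫ = ⟪f 1 - f 0, f' s₀⟫`, and a second mean value estimate bounds
`‖f' s₀ - f' c‖` by `K (‖f 0‖ + A)`. Together, `A ≤ ‖f 1 - f 0‖ + K (‖f 0‖ + A)`, which can be
solved for `A` because `K < 1/2`.
-/

open Set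
open scoped RealInnerProductSpace

section

variable {E : Type*} [NormedAddCommGroup E] [InnerProductSpace ℝ E]

theorem exists_inner_deriv_eq_inner_slope {f f' : ℝ → E} {a b : ℝ} (hab : a < b)
    (hf : ∀ x ∈ Icc a b, HasDerivAt f (f' x) x) (v : E) :
    ∃ c ∈ Ioo a b, ⟪f' c, v⟫ = ⟪slope f a b, v⟫ := by
  have hg : ∀ x ∈ Icc a b, HasDerivAt (fun x => ⟪f x, v⟫) ⟪f' x, v⟫ x := fun x hx => by
    simpa using (hf x hx).inner ℝ (hasDerivAt_const x v)
  obtain ⟨c, hc, hslope⟩ := exists_hasDerivAt_eq_slope _ _ hab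
    (fun x hx => (hg x hx).continuousAt.continuousWithinAt)
    fun x hx => hg x (Ioo_subset_Icc_self hx)
  refine ⟨c, hc, ?_⟩
  rw [hslope, slope_def_module, real_inner_smul_left, inner_sub_left, div_eq_inv_mul]

theorem norm_deriv_le_norm_slope_add {f f' f'' : ℝ → E} {a b M : ℝ} (hab : a < b)
    (hf : ∀ x ∈ Icc a b, HasDerivAt f (f' x) x) (hf' : ∀ x ∈ Icc a b, HasDerivAt f' (f'' x) x)
    (hM : ∀ x ∈ Icc a b, ‖f'' x‖ ≤ M) {s : ℝ} (hs : s ∈ Icc a b) :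
    ‖f' s‖ ≤ ‖slope f a b‖ + M * (b - a) := by
  set v := f' s
  obtain ⟨c, hc, hinner⟩ := exists_inner_deriv_eq_inner_slope hab hf v
  have hc' : c ∈ Icc a b := Ioo_subset_Icc_self hc
  have hvc : ‖v - f' c‖ ≤ M * (b - a) := by
    calc ‖v - f' c‖ ≤ M * ‖s - c‖ :=
          (convex_Icc a b).norm_image_sub_le_of_norm_hasDerivWithin_le
            (fun x hx => (hf' x hx).hasDerivWithinAt) hM hc' hs
      _ ≤ M * (b - a) := by
        have hM0 : 0 ≤ M := (norm_nonneg _).trans (hM s hs)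
        gcongr
        rw [← dist_eq_norm]
        exact Real.dist_le_of_mem_Icc hs hc'
  have hsq : ‖v‖ * ‖v‖ ≤ (‖slope f a b‖ + M * (b - a)) * ‖v‖ := by
    calc ‖v‖ * ‖v‖ = ⟪slope f a b, v⟫ + ⟪v - f' c, v⟫ := by
          rw [← hinner, inner_sub_left, real_inner_self_eq_norm_mul_norm]; ring
      _ ≤ ‖slope f a b‖ * ‖v‖ + ‖v - f' c‖ * ‖v‖ :=
          add_le_add (real_inner_le_norm _ _) (real_inner_le_norm _ _)
      _ ≤ (‖slope f a b‖ + M * (b - a)) * ‖v‖ := by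
          rw [add_mul]; gcongr
  rcases (norm_nonneg v).eq_or_lt with hv | hv
  · rw [← hv]
    exact add_nonneg (norm_nonneg _) (le_trans (norm_nonneg _) hvc)
  · exact le_of_mul_le_mul_right hsq hv

theorem one_sub_mul_norm_deriv_le {f f' f'' : ℝ → E} {K : ℝ} (hK₀ : 0 ≤ K) (hK₁ : K ≤ 1)
    (hf : ∀ x ∈ Icc (0 : ℝ) 1, HasDerivAt f (f' x) x)
    (hf' : ∀ x ∈ Icc (0 : ℝ) 1, HasDerivAt f' (f'' x) x)
    (hf'' : ∀ x ∈ Icc (0 : ℝ) 1, ‖f'' x‖ ≤ K * ‖f x‖) {s : ℝ} (hs : s ∈ Icc (0 : ℝ) 1) :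
    (1 - K) * ‖f' s‖ ≤ ‖f 1 - f 0‖ + K * ‖f 0‖ := by
  have hcont : ContinuousOn f' (Icc 0 1) := fun x hx =>
    (hf' x hx).continuousAt.continuousWithinAt
  obtain ⟨s₀, hs₀, hmax⟩ := isCompact_Icc.exists_isMaxOn (nonempty_Icc.2 zero_le_one) hcont.norm
  set A := ‖f' s₀‖
  have hf'_le : ∀ x ∈ Icc (0 : ℝ) 1, ‖f' x‖ ≤ A := fun x hx => hmax hx
  have hf_le : ∀ x ∈ Icc (0 : ℝ) 1, ‖f x‖ ≤ ‖f 0‖ + A := fun x hx =>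
    calc ‖f x‖ ≤ ‖f 0‖ + ‖f x - f 0‖ := norm_le_insert' _ _
      _ ≤ ‖f 0‖ + A * (x - 0) := by
        gcongr
        exact norm_image_sub_le_of_norm_deriv_le_segment' (fun y hy => (hf y hy).hasDerivWithinAt)
          (fun y hy => hf'_le y (Ico_subset_Icc_self hy)) x hx
      _ ≤ ‖f 0‖ + A := by nlinarith [hx.2, norm_nonneg (f' s₀)]
  have hA : A ≤ ‖f 1 - f 0‖ + K * (‖f 0‖ + A) := by
    simpa [slope_def_module] using norm_deriv_le_norm_slope_add zero_lt_one hf hf'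
      (fun x hx => (hf'' x hx).trans (mul_le_mul_of_nonneg_left (hf_le x hx) hK₀)) hs₀
  calc (1 - K) * ‖f' s‖ ≤ (1 - K) * A := mul_le_mul_of_nonneg_left (hf'_le s hs) (by linarith)
    _ ≤ ‖f 1 - f 0‖ + K * ‖f 0‖ := by linarith

end

theorem jacobi_field_derivative_bound_general
    {E : Type*} [NormedAddCommGroup E] [InnerProductSpace ℝ E]
    (B₀ d : ℝ) (hB₀ : 0 ≤ B₀) (hsmall : B₀ * d ^ 2 < 1 / 2)
    (f f' f'' : ℝ → E)
    (hf : ∀ s ∈ Set.Icc (0 : ℝ) 1, HasDerivAt f (f' s) s)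
    (hf' : ∀ s ∈ Set.Icc (0 : ℝ) 1, HasDerivAt f' (f'' s) s)
    (hJacobi : ∀ s ∈ Set.Icc (0 : ℝ) 1, ‖f'' s‖ ≤ B₀ * d ^ 2 * ‖f s‖) :
    ∀ s ∈ Set.Icc (0 : ℝ) 1,
      ‖f' s‖ ≤ 2 * B₀ * ‖f 0‖ * d ^ 2 + 2 * ‖f 1 - f 0‖ := by
  intro s hs
  have hK₀ : 0 ≤ B₀ * d ^ 2 := by positivity
  have key := one_sub_mul_norm_deriv_le hK₀ (hsmall.le.trans (by norm_num)) hf hf' hJacobi hs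
  nlinarith [norm_nonneg (f' s), norm_nonneg (f 0)]

/-- Lemma 3.1 of the paper. Let `J` be the Jacobi field along the unique
minimizing geodesic `γ_τ` (of speed `|γ̇| = d`, with `0 < d < min{i₀, 1/√(2B₀)}` so that
`B₀ d² < 1/2`) joining two curves `p(τ)`, `p̃(τ)`, with `J(0) = ∂_τ p`, `J(1) = ∂_τ p̃`.
In a parallel orthonormal frame along `γ`, `J` is represented by a curve `f : [0,1] → E`
whose second derivative satisfies the Jacobi-equation bound `‖f''‖ ≤ B₀ d² ‖f‖` (since
`|R̄| ≤ B₀` and `|γ̇| = d`); moreover `P ∂_τ p̃ − ∂_τ p` is represented by `f 1 - f 0`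
(`P` being parallel transport along `γ`).  Then
`|∇̄_{γ̇} J| ≤ 2 B₀ |∂_τ p| d² + 2 |P ∂_τ p̃ − ∂_τ p|`. -/
theorem jacobi_field_derivative_bound
    {E : Type*} [NormedAddCommGroup E] [InnerProductSpace ℝ E]
    (B₀ d : ℝ) (hB₀ : 0 ≤ B₀) (hd : 0 < d) (hsmall : B₀ * d ^ 2 < 1 / 2)
    (f f' f'' : ℝ → E)
    (hf : ∀ s ∈ Set.Icc (0 : ℝ) 1, HasDerivAt f (f' s) s)
    (hf' : ∀ s ∈ Set.Icc (0 : ℝ) 1, HasDerivAt f' (f'' s) s)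
    (hJacobi : ∀ s ∈ Set.Icc (0 : ℝ) 1, ‖f'' s‖ ≤ B₀ * d ^ 2 * ‖f s‖) :
    ∀ s ∈ Set.Icc (0 : ℝ) 1,
      ‖f' s‖ ≤ 2 * B₀ * ‖f 0‖ * d ^ 2 + 2 * ‖f 1 - f 0‖ :=
  jacobi_field_derivative_bound_general B₀ d hB₀ hsmall f f' f'' hf hf' hJacobi
end

section
/- Under the same hypotheses as the previous statement, the Jacobi field J satisfies |J| ≤ |∂_τ p| + 2B₀ |∂_τ p| d² + 2 |P ∂_τ p̃ − ∂_τ p|. -/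
/-!
Let `M = max_{[0,1]} ‖f‖`. Then `‖f''‖ ≤ K M` with `K = B₀ d²`, so `f'` oscillates by at most
`K M` and hence stays within `K M` of the secant slope `f 1 - f 0`. Integrating once more,
`‖f s - f 0‖ ≤ ‖f 1 - f 0‖ + K M`. Taking `s` where the maximum is attained gives
`M ≤ ‖f 0‖ + ‖f 1 - f 0‖ + K M`, and `K < 1/2` absorbs the last term:
`M ≤ 2 (‖f 0‖ + ‖f 1 - f 0‖)`. Substituting back yields the bound.
-/

open Set

section UnitInterval

variable {E : Type*} [NormedAddCommGroup E] [NormedSpace ℝ E] {g g' g'' : ℝ → E} {C : ℝ}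

theorem norm_sub_le_of_norm_deriv_le_Icc01
    (hg : ∀ x ∈ Icc (0 : ℝ) 1, HasDerivAt g (g' x) x)
    (hC : ∀ x ∈ Icc (0 : ℝ) 1, ‖g' x‖ ≤ C)
    {t u : ℝ} (ht : t ∈ Icc (0 : ℝ) 1) (hu : u ∈ Icc (0 : ℝ) 1) :
    ‖g t - g u‖ ≤ C := by
  have hC₀ : 0 ≤ C := (norm_nonneg _).trans (hC t ht)
  have hdist : ‖t - u‖ ≤ 1 := by
    rw [Real.norm_eq_abs, abs_le]
    constructor <;> linarith [ht.1, ht.2, hu.1, hu.2]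
  calc ‖g t - g u‖ ≤ C * ‖t - u‖ :=
        (convex_Icc 0 1).norm_image_sub_le_of_norm_hasDerivWithin_le
          (fun x hx => (hg x hx).hasDerivWithinAt) hC hu ht
    _ ≤ C := mul_le_of_le_one_right hC₀ hdist

theorem norm_deriv_sub_secant_le
    (hg : ∀ x ∈ Icc (0 : ℝ) 1, HasDerivAt g (g' x) x)
    (hC : ∀ x ∈ Icc (0 : ℝ) 1, ∀ y ∈ Icc (0 : ℝ) 1, ‖g' x - g' y‖ ≤ C)
    {t : ℝ} (ht : t ∈ Icc (0 : ℝ) 1) :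
    ‖g' t - (g 1 - g 0)‖ ≤ C := by
  have hline : ∀ x ∈ Icc (0 : ℝ) 1,
      HasDerivWithinAt (fun u => g u - u • g' t) (g' x - g' t) (Icc 0 1) x := fun x hx =>
    ((hg x hx).sub ((hasDerivAt_id x).smul_const (g' t))).hasDerivWithinAt.congr_deriv
      (by simp)
  calc ‖g' t - (g 1 - g 0)‖ = ‖g 1 - (1 : ℝ) • g' t - (g 0 - (0 : ℝ) • g' t)‖ := by
        rw [one_smul, zero_smul, sub_zero, ← norm_neg]
        congr 1
        abel
    _ ≤ C := norm_image_sub_le_of_norm_deriv_le_segment_01' hline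
        fun x hx => hC x (Ico_subset_Icc_self hx) t ht

theorem norm_sub_apply_zero_le_of_norm_deriv2_le
    (hg : ∀ x ∈ Icc (0 : ℝ) 1, HasDerivAt g (g' x) x)
    (hg' : ∀ x ∈ Icc (0 : ℝ) 1, HasDerivAt g' (g'' x) x)
    (hC : ∀ x ∈ Icc (0 : ℝ) 1, ‖g'' x‖ ≤ C)
    {s : ℝ} (hs : s ∈ Icc (0 : ℝ) 1) :
    ‖g s - g 0‖ ≤ ‖g 1 - g 0‖ + C := by
  have hslope : ∀ t ∈ Icc (0 : ℝ) 1, ‖g' t‖ ≤ ‖g 1 - g 0‖ + C := fun t ht =>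
    calc ‖g' t‖ ≤ ‖g 1 - g 0‖ + ‖g' t - (g 1 - g 0)‖ := norm_le_insert' _ _
      _ ≤ ‖g 1 - g 0‖ + C := by
        gcongr
        exact norm_deriv_sub_secant_le hg
          (fun x hx y hy => norm_sub_le_of_norm_deriv_le_Icc01 hg' hC hx hy) ht
  exact norm_sub_le_of_norm_deriv_le_Icc01 hg hslope hs ⟨le_rfl, zero_le_one⟩

theorem norm_le_of_norm_deriv2_le_mul_norm {K : ℝ} (hK₀ : 0 ≤ K) (hK : K < 1 / 2)
    (hg : ∀ x ∈ Icc (0 : ℝ) 1, HasDerivAt g (g' x) x)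
    (hg' : ∀ x ∈ Icc (0 : ℝ) 1, HasDerivAt g' (g'' x) x)
    (hg'' : ∀ x ∈ Icc (0 : ℝ) 1, ‖g'' x‖ ≤ K * ‖g x‖)
    {s : ℝ} (hs : s ∈ Icc (0 : ℝ) 1) :
    ‖g s‖ ≤ ‖g 0‖ + 2 * K * ‖g 0‖ + 2 * ‖g 1 - g 0‖ := by
  obtain ⟨s₀, hs₀, hmax⟩ := isCompact_Icc.exists_isMaxOn (nonempty_Icc.2 zero_le_one)
    (continuousOn_of_forall_continuousAt fun x hx => (hg x hx).continuousAt).norm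
  set M := ‖g s₀‖
  have hgap : ∀ t ∈ Icc (0 : ℝ) 1, ‖g t‖ ≤ ‖g 0‖ + ‖g 1 - g 0‖ + K * M := fun t ht =>
    calc ‖g t‖ ≤ ‖g 0‖ + ‖g t - g 0‖ := norm_le_insert' _ _
      _ ≤ ‖g 0‖ + (‖g 1 - g 0‖ + K * M) := by
        gcongr
        refine norm_sub_apply_zero_le_of_norm_deriv2_le hg hg' (fun x hx => ?_) ht
        exact (hg'' x hx).trans (mul_le_mul_of_nonneg_left (hmax hx) hK₀)
      _ = _ := by ring
  have hM : M ≤ 2 * (‖g 0‖ + ‖g 1 - g 0‖) := by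
    nlinarith [hgap s₀ hs₀, mul_le_mul_of_nonneg_left hK.le (norm_nonneg (g s₀))]
  nlinarith [hgap s hs, norm_nonneg (g 1 - g 0)]

end UnitInterval

/-- `f` is the Jacobi field `J` written in a parallel orthonormal frame along the geodesic, so
`f 0 = ∂_τ p`, `f 1 = P ∂_τ p̃`, and the Jacobi equation with `|R̄| ≤ B₀` and speed `d` gives
`‖f''‖ ≤ B₀ d² ‖f‖`. -/
theorem jacobi_field_bound_general
    {E : Type*} [NormedAddCommGroup E] [InnerProductSpace ℝ E]
    (B₀ d : ℝ) (hB₀ : 0 ≤ B₀) (hsmall : B₀ * d ^ 2 < 1 / 2)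
    (f f' f'' : ℝ → E)
    (hf : ∀ s ∈ Set.Icc (0 : ℝ) 1, HasDerivAt f (f' s) s)
    (hf' : ∀ s ∈ Set.Icc (0 : ℝ) 1, HasDerivAt f' (f'' s) s)
    (hJacobi : ∀ s ∈ Set.Icc (0 : ℝ) 1, ‖f'' s‖ ≤ B₀ * d ^ 2 * ‖f s‖) :
    ∀ s ∈ Set.Icc (0 : ℝ) 1,
      ‖f s‖ ≤ ‖f 0‖ + 2 * B₀ * ‖f 0‖ * d ^ 2 + 2 * ‖f 1 - f 0‖ := by
  intro s hs
  have h := norm_le_of_norm_deriv2_le_mul_norm (by positivity) hsmall hf hf' hJacobi hs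
  linarith

/-- Lemma 3.1 of the paper, second inequality. Same setting as
Statement 3: `f` represents, in a parallel orthonormal frame, the Jacobi field `J` along
the minimizing geodesic of speed `d` (with `B₀ d² < 1/2`, `|R̄| ≤ B₀`) joining `p(τ)` to
`p̃(τ)`, so `f 0 = ∂_τ p`, `f 1 = P ∂_τ p̃` and `‖f''‖ ≤ B₀ d² ‖f‖`.  Then
`|J| ≤ |∂_τ p| + 2 B₀ |∂_τ p| d² + 2 |P ∂_τ p̃ − ∂_τ p|`. -/
theorem jacobi_field_bound
    {E : Type*} [NormedAddCommGroup E] [InnerProductSpace ℝ E]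
    (B₀ d : ℝ) (hB₀ : 0 ≤ B₀) (hd : 0 < d) (hsmall : B₀ * d ^ 2 < 1 / 2)
    (f f' f'' : ℝ → E)
    (hf : ∀ s ∈ Set.Icc (0 : ℝ) 1, HasDerivAt f (f' s) s)
    (hf' : ∀ s ∈ Set.Icc (0 : ℝ) 1, HasDerivAt f' (f'' s) s)
    (hJacobi : ∀ s ∈ Set.Icc (0 : ℝ) 1, ‖f'' s‖ ≤ B₀ * d ^ 2 * ‖f s‖) :
    ∀ s ∈ Set.Icc (0 : ℝ) 1,
      ‖f s‖ ≤ ‖f 0‖ + 2 * B₀ * ‖f 0‖ * d ^ 2 + 2 * ‖f 1 - f 0‖ :=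
  jacobi_field_bound_general B₀ d hB₀ hsmall f f' f'' hf hf' hJacobi
end
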